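/- arXiv:1912.08406 — 5 statements merged into one kernel-verified Lean document; each statement's English description precedes it below -/
import Mathlib

section
/- Let d, K, m be positive integers, Γ ∈ ℝ^{K×K} symmetric positive definite, and let C ∈ ℝ^{(d+K)×(d+K)} be a symmetric positive definite matrix written in blocks C = [[C_uu, C_uw],[C_uwᵀ, C_ww]] with C_uu ∈ ℝ^{d×d}, C_uw ∈ ℝ^{d×K}, C_ww ∈ ℝ^{K×K}. Let H = [0, I_K] ∈ ℝ^{K×(d+K)} and H^⊥ = [I_d, 0] ∈ ℝ^{d×(d+K)}. Let G : ℝ^d → ℝ^K, let A : ℝ^d → ℝ^m be differentiable with Jacobian matrix J_A(u) ∈ ℝ^{m×d}, let û ∈ ℝ^d, y ∈ ℝ^K, and set v̂ = (û, G(û)) ∈ ℝ^{d+K}. Suppose (v, λ) ∈ ℝ^{d+K} × ℝ^m satisfies the stationarity conditions (HᵀΓH + C⁻¹) v − (HᵀΓ y + C⁻¹ v̂) + [J_A(H^⊥v), 0]ᵀ λ = 0 and A(H^⊥ v) = 0. Then u := H^⊥ v satisfies u = û + C_uw (C_ww + Γ⁻¹)⁻¹ (y − G(û)) + C_uw (C_ww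 + Γ⁻¹)⁻¹ C_uwᵀ J_A(u)ᵀ λ − C_uu J_A(u)ᵀ λ, together with A(u) = 0. -/
/-!
Multiplying the stationarity equation by `C` turns it into
`v = v̂ + C (HᵀΓ (y - H v) - [J_A(u), 0]ᵀ λ)`. Write `v = (u, w)`, `q = J_A(u)ᵀ λ` and
`z = Γ (y - w)`. The lower block row reads `w = G(û) + C_ww z - C_uwᵀ q`; since `y - w = Γ⁻¹ z`
this is `(C_ww + Γ⁻¹) z = y - G(û) + C_uwᵀ q`, which determines `z` because `C_ww + Γ⁻¹` is
positive definite. Substituting `z` into the upper block row `u = û + C_uw z - C_uu q` gives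
the update formula.
-/

open Matrix

namespace Matrix

variable {ι κ μ R : Type*}

theorem PosDef.toBlocks₂₂ [Ring R] [PartialOrder R] [StarRing R]
    {M : Matrix (ι ⊕ κ) (ι ⊕ κ) R} (hM : M.PosDef) : M.toBlocks₂₂.PosDef :=
  hM.submatrix Sum.inr_injective

variable [CommRing R]

theorem fromCols_zero_transpose_mulVec [Fintype μ] (J : Matrix μ ι R) (x : μ → R) :
    (fromCols J (0 : Matrix μ κ R))ᵀ *ᵥ x = Sum.elim (Jᵀ *ᵥ x) 0 := by
  simp [transpose_fromCols]

theorem fromCols_zero_one_transpose_mulVec [Fintype κ] [DecidableEq κ] (x : κ → R) :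
    (fromCols (0 : Matrix κ ι R) 1)ᵀ *ᵥ x = Sum.elim (0 : ι → R) x := by
  simp [transpose_fromCols]

variable [Fintype ι] [Fintype κ]

theorem fromCols_one_zero_mulVec_sumElim [DecidableEq ι] (u : ι → R) (w : κ → R) :
    fromCols (1 : Matrix ι ι R) 0 *ᵥ Sum.elim u w = u := by
  simp

theorem fromCols_zero_one_mulVec_sumElim [DecidableEq κ] (u : ι → R) (w : κ → R) :
    fromCols (0 : Matrix κ ι R) 1 *ᵥ Sum.elim u w = w := by
  simp

theorem fromBlocks_mulVec_sumElim (A : Matrix ι ι R) (B : Matrix ι κ R) (C : Matrix κ ι R)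
    (D : Matrix κ κ R) (x : ι → R) (y : κ → R) :
    fromBlocks A B C D *ᵥ Sum.elim x y = Sum.elim (A *ᵥ x + B *ᵥ y) (C *ᵥ x + D *ᵥ y) := by
  simp [fromBlocks_mulVec]

theorem eq_add_mulVec_of_add_inv_mulVec_sub_add_eq_zero [DecidableEq ι] {C M : Matrix ι ι R}
    (hC : IsUnit C) {v vhat b r : ι → R}
    (h : (M + C⁻¹) *ᵥ v - (b + C⁻¹ *ᵥ vhat) + r = 0) :
    v = vhat + C *ᵥ (b - M *ᵥ v - r) := by
  have hCC : ∀ x, C *ᵥ (C⁻¹ *ᵥ x) = x := fun x => by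
    rw [mulVec_mulVec, mul_nonsing_inv C ((isUnit_iff_isUnit_det C).mp hC), one_mulVec]
  have hCh := congrArg (C *ᵥ ·) h
  simp only [add_mulVec, mulVec_add, mulVec_sub, hCC, mulVec_zero] at hCh
  rw [mulVec_sub, mulVec_sub]
  linear_combination hCh

theorem add_inv_mulVec_mulVec_sub_eq [DecidableEq κ] {Cww Γ : Matrix κ κ R}
    {Cwu : Matrix κ ι R} (hΓ : IsUnit Γ) {w g y : κ → R} {q : ι → R}
    (hw : w = g + Cww *ᵥ (Γ *ᵥ (y - w)) - Cwu *ᵥ q) :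
    (Cww + Γ⁻¹) *ᵥ (Γ *ᵥ (y - w)) = y - g + Cwu *ᵥ q := by
  rw [add_mulVec, mulVec_mulVec (y - w) Γ⁻¹, nonsing_inv_mul Γ ((isUnit_iff_isUnit_det Γ).mp hΓ),
    one_mulVec]
  linear_combination -hw

theorem eq_add_mulVec_of_block_eqs [DecidableEq κ] {Cuu : Matrix ι ι R} {Cuw : Matrix ι κ R}
    {Cwu : Matrix κ ι R} {Cww Γ : Matrix κ κ R} (hΓ : IsUnit Γ) (hS : IsUnit (Cww + Γ⁻¹))
    {u uhat q : ι → R} {w g y : κ → R}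
    (hu : u = uhat + Cuw *ᵥ (Γ *ᵥ (y - w)) - Cuu *ᵥ q)
    (hw : w = g + Cww *ᵥ (Γ *ᵥ (y - w)) - Cwu *ᵥ q) :
    u = uhat + (Cuw * (Cww + Γ⁻¹)⁻¹) *ᵥ (y - g) + (Cuw * (Cww + Γ⁻¹)⁻¹ * Cwu) *ᵥ q
      - Cuu *ᵥ q := by
  have hz : Γ *ᵥ (y - w) = (Cww + Γ⁻¹)⁻¹ *ᵥ (y - g + Cwu *ᵥ q) := by
    rw [← add_inv_mulVec_mulVec_sub_eq hΓ hw, mulVec_mulVec,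
      nonsing_inv_mul _ ((isUnit_iff_isUnit_det _).mp hS), one_mulVec]
  rw [hu, hz]
  simp only [← mulVec_mulVec, mulVec_add]
  abel

end Matrix

theorem stmt_4_general {d K m : ℕ}
    (Γ : Matrix (Fin K) (Fin K) ℝ) (hΓ : Γ.PosDef)
    (Cuu : Matrix (Fin d) (Fin d) ℝ) (Cuw : Matrix (Fin d) (Fin K) ℝ)
    (Cww : Matrix (Fin K) (Fin K) ℝ)
    (C : Matrix (Fin d ⊕ Fin K) (Fin d ⊕ Fin K) ℝ)
    (hCblocks : C = fromBlocks Cuu Cuw Cuwᵀ Cww)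
    (hC : C.PosDef)
    (H : Matrix (Fin K) (Fin d ⊕ Fin K) ℝ) (hH : H = fromCols 0 1)
    (Hperp : Matrix (Fin d) (Fin d ⊕ Fin K) ℝ) (hHperp : Hperp = fromCols 1 0)
    (G : (Fin d → ℝ) → (Fin K → ℝ))
    (A : (Fin d → ℝ) → (Fin m → ℝ))
    (JA : (Fin d → ℝ) → Matrix (Fin m) (Fin d) ℝ)
    (uhat : Fin d → ℝ) (y : Fin K → ℝ) (vhat : Fin d ⊕ Fin K → ℝ)
    (hvhat : vhat = Sum.elim uhat (G uhat))
    (v : Fin d ⊕ Fin K → ℝ) (lam : Fin m → ℝ)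
    (hstat : (Hᵀ * Γ * H + C⁻¹) *ᵥ v - (Hᵀ *ᵥ (Γ *ᵥ y) + C⁻¹ *ᵥ vhat)
        + (fromCols (JA (Hperp *ᵥ v)) 0)ᵀ *ᵥ lam = 0)
    (hconstr : A (Hperp *ᵥ v) = 0)
    (u : Fin d → ℝ) (hu : u = Hperp *ᵥ v) :
    u = uhat + (Cuw * (Cww + Γ⁻¹)⁻¹) *ᵥ (y - G uhat)
        + (Cuw * (Cww + Γ⁻¹)⁻¹ * Cuwᵀ * (JA u)ᵀ) *ᵥ lam
        - (Cuu * (JA u)ᵀ) *ᵥ lam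
      ∧ A u = 0 := by
  obtain ⟨u', w, rfl⟩ : ∃ u' w, v = Sum.elim u' w :=
    ⟨v ∘ Sum.inl, v ∘ Sum.inr, (Sum.elim_comp_inl_inr v).symm⟩
  subst hH hHperp hvhat
  rw [fromCols_one_zero_mulVec_sumElim] at hstat hconstr hu
  subst hu
  refine ⟨?_, hconstr⟩
  have hCww : Cww.PosDef := by simpa [hCblocks] using hC.toBlocks₂₂
  have hv := eq_add_mulVec_of_add_inv_mulVec_sub_add_eq_zero hC.isUnit hstat
  simp only [← mulVec_mulVec, fromCols_zero_one_mulVec_sumElim, fromCols_zero_one_transpose_mulVec,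
    fromCols_zero_transpose_mulVec, hCblocks, ← Sum.elim_sub_sub, fromBlocks_mulVec_sumElim,
    ← Sum.elim_add_add, Sum.elim_eq_iff, zero_sub, sub_zero, mulVec_neg, ← mulVec_sub] at hv
  obtain ⟨hu, hw⟩ := hv
  have hsol := eq_add_mulVec_of_block_eqs hΓ.isUnit (hCww.add hΓ.inv).isUnit
    (hu.trans (by abel)) (hw.trans (by abel))
  simpa only [mulVec_mulVec] using hsol

/-- First-order necessary optimality conditions for the constrained compromise
step of the ensemble Kalman filter: if `(v, λ)` satisfies the stationarity
conditions of the Lagrangian, then `u = H^⊥ v` satisfies the constrained EnKF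
update formula together with `A(u) = 0`. -/
theorem stmt_4 {d K m : ℕ} (hd : 0 < d) (hK : 0 < K) (hm : 0 < m)
    (Γ : Matrix (Fin K) (Fin K) ℝ) (hΓ : Γ.PosDef)
    (Cuu : Matrix (Fin d) (Fin d) ℝ) (Cuw : Matrix (Fin d) (Fin K) ℝ)
    (Cww : Matrix (Fin K) (Fin K) ℝ)
    (C : Matrix (Fin d ⊕ Fin K) (Fin d ⊕ Fin K) ℝ)
    (hCblocks : C = fromBlocks Cuu Cuw Cuwᵀ Cww)
    (hC : C.PosDef)
    (H : Matrix (Fin K) (Fin d ⊕ Fin K) ℝ) (hH : H = fromCols 0 1)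
    (Hperp : Matrix (Fin d) (Fin d ⊕ Fin K) ℝ) (hHperp : Hperp = fromCols 1 0)
    (G : (Fin d → ℝ) → (Fin K → ℝ))
    (A : (Fin d → ℝ) → (Fin m → ℝ))
    (JA : (Fin d → ℝ) → Matrix (Fin m) (Fin d) ℝ)
    (hJA : ∀ u, HasFDerivAt A
      (LinearMap.toContinuousLinearMap (Matrix.mulVecLin (JA u))) u)
    (uhat : Fin d → ℝ) (y : Fin K → ℝ) (vhat : Fin d ⊕ Fin K → ℝ)
    (hvhat : vhat = Sum.elim uhat (G uhat))
    (v : Fin d ⊕ Fin K → ℝ) (lam : Fin m → ℝ)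
    (hstat : (Hᵀ * Γ * H + C⁻¹) *ᵥ v - (Hᵀ *ᵥ (Γ *ᵥ y) + C⁻¹ *ᵥ vhat)
        + (fromCols (JA (Hperp *ᵥ v)) 0)ᵀ *ᵥ lam = 0)
    (hconstr : A (Hperp *ᵥ v) = 0)
    (u : Fin d → ℝ) (hu : u = Hperp *ᵥ v) :
    u = uhat + (Cuw * (Cww + Γ⁻¹)⁻¹) *ᵥ (y - G uhat)
        + (Cuw * (Cww + Γ⁻¹)⁻¹ * Cuwᵀ * (JA u)ᵀ) *ᵥ lam
        - (Cuu * (JA u)ᵀ) *ᵥ lam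
      ∧ A u = 0 :=
  stmt_4_general Γ hΓ Cuu Cuw Cww C hCblocks hC H hH Hperp hHperp G A JA uhat y vhat hvhat v lam
    hstat hconstr u hu
end

section
/- Let A ∈ ℝ^{m×d}, G : ℝ^d → ℝ^K, y ∈ ℝ^K, and Γ ∈ ℝ^{K×K} symmetric positive definite. Given an initial ensemble u^{1,0}, …, u^{J,0} ∈ ℝ^d with A u^{j,0} = 0 for all j, define recursively for n ≥ 0 the unconstrained ensemble Kalman filter iteration u^{j,n+1} = u^{j,n} + C_uw^{n} (C_ww^{n} + Γ⁻¹)⁻¹ (y − G(u^{j,n})), where C_uw^{n} = (1/J)∑_k (u^{k,n} − ū^n)(G(u^{k,n}) − Ḡ^n)ᵀ and C_ww^{n} = (1/J)∑_k (G(u^{k,n}) − Ḡ^n)(G(u^{k,n}) − Ḡ^n)ᵀ, with ū^n = (1/J)∑_k u^{k,n} and Ḡ^n = (1/J)∑_k G(u^{k,n}). Then C_ww^{n} + Γ⁻¹ is invertible at every step and A u^{j,n} = 0 for all j = 1,…,J and all n ≥ 0. -/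
/-!
The Kalman increment of each member lies in the column space of `C_uw`, which is spanned by
the centred members `u^k - ū`; these lie in `ker A` as soon as the whole ensemble does, so
`ker A` is invariant under the iteration. Invertibility holds because `C_ww` is positive
semidefinite and `Γ⁻¹` positive definite.
-/

open Matrix

theorem posSemidef_smul_sum_vecMulVec_self {ι n : Type*} [Fintype ι] [Finite n] {c : ℝ}
    (hc : 0 ≤ c) (w : ι → n → ℝ) : (c • ∑ k, vecMulVec (w k) (w k)).PosSemidef :=
  (posSemidef_sum _ fun k _ => by simpa using posSemidef_vecMulVec_self_star (w k)).smul hc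

theorem isUnit_det_add_inv_of_posSemidef {n : Type*} [Fintype n] [DecidableEq n]
    {C Γ : Matrix n n ℝ} (hC : C.PosSemidef) (hΓ : Γ.PosDef) : IsUnit (C + Γ⁻¹).det :=
  (PosDef.posSemidef_add hC hΓ.inv).det_pos.ne'.isUnit

section Constraint

variable {ι m n p R : Type*} [Fintype ι] [Fintype n] [CommRing R] {A : Matrix m n R}

theorem mulVec_smul_sum_eq_zero {v : ι → n → R} (hv : ∀ k, A *ᵥ v k = 0) (c : R) :
    A *ᵥ (c • ∑ k, v k) = 0 := by
  simp [mulVec_smul, mulVec_sum, hv]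

theorem mul_sum_vecMulVec_eq_zero {v : ι → n → R} (hv : ∀ k, A *ᵥ v k = 0) (w : ι → p → R) :
    A * ∑ k, vecMulVec (v k) (w k) = 0 := by
  simp [Matrix.mul_sum, mul_vecMulVec, hv]

theorem mulVec_add_mul_mulVec_eq_zero {q : Type*} [Fintype p] [Fintype q] {x : n → R}
    {C : Matrix n p R} (hx : A *ᵥ x = 0) (hC : A * C = 0) (M : Matrix p q R) (r : q → R) :
    A *ᵥ (x + (C * M) *ᵥ r) = 0 := by
  rw [mulVec_add, hx, mulVec_mulVec, ← Matrix.mul_assoc, hC, Matrix.zero_mul, zero_mulVec,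
    add_zero]

end Constraint

theorem stmt_6_general {m d K J : ℕ}
    (A : Matrix (Fin m) (Fin d) ℝ)
    (G : (Fin d → ℝ) → (Fin K → ℝ)) (y : Fin K → ℝ)
    (Γ : Matrix (Fin K) (Fin K) ℝ) (hΓ : Γ.PosDef)
    (u : ℕ → Fin J → (Fin d → ℝ))
    (ubar : ℕ → (Fin d → ℝ)) (hubar : ∀ n, ubar n = (1 / (J : ℝ)) • ∑ k, u n k)
    (Gbar : ℕ → (Fin K → ℝ))
    (Cuw : ℕ → Matrix (Fin d) (Fin K) ℝ)
    (hCuw : ∀ n, Cuw n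
      = (1 / (J : ℝ)) • ∑ k, vecMulVec (u n k - ubar n) (G (u n k) - Gbar n))
    (Cww : ℕ → Matrix (Fin K) (Fin K) ℝ)
    (hCww : ∀ n, Cww n
      = (1 / (J : ℝ)) • ∑ k, vecMulVec (G (u n k) - Gbar n) (G (u n k) - Gbar n))
    (hinit : ∀ j, A *ᵥ u 0 j = 0)
    (hiter : ∀ n j, u (n + 1) j
      = u n j + (Cuw n * (Cww n + Γ⁻¹)⁻¹) *ᵥ (y - G (u n j))) :
    (∀ n, IsUnit (Cww n + Γ⁻¹).det) ∧ ∀ n j, A *ᵥ u n j = 0 := by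
  refine ⟨fun n => isUnit_det_add_inv_of_posSemidef ?_ hΓ, fun n => ?_⟩
  · exact hCww n ▸ posSemidef_smul_sum_vecMulVec_self (by positivity) _
  induction n with
  | zero => exact hinit
  | succ n ih =>
    have hmean : A *ᵥ ubar n = 0 := hubar n ▸ mulVec_smul_sum_eq_zero ih _
    have hCuw_ann : A * Cuw n = 0 := by
      have hcentered k : A *ᵥ (u n k - ubar n) = 0 := by rw [mulVec_sub, ih, hmean, sub_zero]
      rw [hCuw n, Matrix.mul_smul, mul_sum_vecMulVec_eq_zero hcentered, smul_zero]
    intro j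
    exact hiter n j ▸ mulVec_add_mul_mulVec_eq_zero (ih j) hCuw_ann _ _

/-- Linear equality constraints `A u = 0` are automatically preserved by the
unconstrained ensemble Kalman filter iteration, for an arbitrary (possibly
nonlinear) forward operator `G`; moreover `C_ww^n + Γ⁻¹` is invertible at every
step. -/
theorem stmt_6 {m d K J : ℕ} (hJ : 0 < J)
    (A : Matrix (Fin m) (Fin d) ℝ)
    (G : (Fin d → ℝ) → (Fin K → ℝ)) (y : Fin K → ℝ)
    (Γ : Matrix (Fin K) (Fin K) ℝ) (hΓ : Γ.PosDef)
    (u : ℕ → Fin J → (Fin d → ℝ))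
    (ubar : ℕ → (Fin d → ℝ)) (hubar : ∀ n, ubar n = (1 / (J : ℝ)) • ∑ k, u n k)
    (Gbar : ℕ → (Fin K → ℝ)) (hGbar : ∀ n, Gbar n = (1 / (J : ℝ)) • ∑ k, G (u n k))
    (Cuw : ℕ → Matrix (Fin d) (Fin K) ℝ)
    (hCuw : ∀ n, Cuw n
      = (1 / (J : ℝ)) • ∑ k, vecMulVec (u n k - ubar n) (G (u n k) - Gbar n))
    (Cww : ℕ → Matrix (Fin K) (Fin K) ℝ)
    (hCww : ∀ n, Cww n
      = (1 / (J : ℝ)) • ∑ k, vecMulVec (G (u n k) - Gbar n) (G (u n k) - Gbar n))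
    (hinit : ∀ j, A *ᵥ u 0 j = 0)
    (hiter : ∀ n j, u (n + 1) j
      = u n j + (Cuw n * (Cww n + Γ⁻¹)⁻¹) *ᵥ (y - G (u n j))) :
    (∀ n, IsUnit (Cww n + Γ⁻¹).det) ∧ ∀ n j, A *ᵥ u n j = 0 :=
  stmt_6_general A G y Γ hΓ u ubar hubar Gbar Cuw hCuw Cww hCww hinit hiter
end

section
/- Let G ∈ ℝ^{K×d}, y ∈ ℝ^K, let Γ ∈ ℝ^{K×K} be symmetric positive semidefinite, let Q ∈ ℝ^{d×d} be symmetric positive semidefinite and b ∈ ℝ^d, defining the convex quadratic constraint A(u) = ½ uᵀQu + bᵀu with gradient ∇A(u) = Qu + b. Let Λ : [0,∞) → ℝ be continuous with Λ(t) ≥ 0 for all t, and let u^1, …, u^J : [0,∞) → ℝ^d be differentiable functions satisfying, for every j and every t ≥ 0, (d/dt) u^j(t) = −C(t) ( GᵀΓ(G u^j(t) − y) + Λ(t) (Q u^j(t) + b) ), where C(t) = (1/J)∑_k (u^k(t) − ū(t))(u^k(t) − ū(t))ᵀ and ū(t) = (1/J)∑_k u^k(t). Then the ensemble spread E(t) =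 (1/J)∑_{j=1}^J ‖u^j(t) − ū(t)‖² is nonincreasing in t; in particular E(t) ≤ E(0) for all t ≥ 0. -/
/-!
The spread vectors `e j = u j - ū` obey the linear equation `ė j = -C M e j` with
`M = GᵀΓG + Λ Q`, which is positive semidefinite because `Λ ≥ 0`: the affine part of the
dynamics is common to all members and cancels against the mean. Writing `X` for the matrix
with rows `e j`, so that `C = XᵀX / J`, the derivative of the spread is
`E' = -(2/J) ∑ j, e jᵀ C M e j = -2 tr (C M C) ≤ 0`.
-/

open Matrix

theorem sum_vecMulVec_self_eq_transpose_mul {ι n R : Type*} [Fintype ι]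
    [NonUnitalNonAssocSemiring R] (e : ι → n → R) :
    ∑ k, vecMulVec (e k) (e k) = (of e)ᵀ * of e := by
  ext a b
  simp [mul_apply, vecMulVec_apply, Matrix.sum_apply]

theorem sum_dotProduct_mulVec_eq_trace {ι n R : Type*} [Fintype ι] [Fintype n]
    [NonUnitalSemiring R] (e : ι → n → R) (A : Matrix n n R) :
    ∑ j, e j ⬝ᵥ A *ᵥ e j = trace (of e * A * (of e)ᵀ) := by
  simp only [dotProduct_mulVec]
  simp only [trace, diag_apply, mul_apply, vecMul, dotProduct, of_apply, transpose_apply]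

theorem sum_dotProduct_gram_mul_mulVec_nonneg {ι n : Type*} [Fintype ι] [Fintype n]
    {M : Matrix n n ℝ} (hM : M.PosSemidef) (e : ι → n → ℝ) :
    0 ≤ ∑ j, e j ⬝ᵥ ((∑ k, vecMulVec (e k) (e k)) * M) *ᵥ e j := by
  set X : Matrix ι n ℝ := of e
  have hgram : (Xᵀ * X)ᴴ = Xᵀ * X := by
    rw [conjTranspose_eq_transpose_of_trivial, transpose_mul, transpose_transpose]
  calc 0 ≤ trace ((Xᵀ * X)ᴴ * M * (Xᵀ * X)) := (hM.conjTranspose_mul_mul_same _).trace_nonneg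
    _ = trace (X * (Xᵀ * X * M) * Xᵀ) := by
      rw [hgram, Matrix.mul_assoc X, trace_mul_comm X]; simp only [Matrix.mul_assoc]
    _ = _ := by rw [sum_dotProduct_mulVec_eq_trace, sum_vecMulVec_self_eq_transpose_mul]

theorem Matrix.PosSemidef.transpose_mul_mul_add_smul {m n : Type*} [Fintype m] [Fintype n]
    {Γ : Matrix m m ℝ} (hΓ : Γ.PosSemidef) (G : Matrix m n ℝ) {Q : Matrix n n ℝ}
    (hQ : Q.PosSemidef) {c : ℝ} (hc : 0 ≤ c) : (Gᵀ * Γ * G + c • Q).PosSemidef := by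
  refine PosSemidef.add ?_ (hQ.smul hc)
  simpa only [conjTranspose_eq_transpose_of_trivial] using hΓ.conjTranspose_mul_mul_same G

theorem HasDerivWithinAt.dotProduct {n : Type*} [Fintype n] {f g : ℝ → n → ℝ} {f' g' : n → ℝ}
    {s : Set ℝ} {x : ℝ} (hf : HasDerivWithinAt f f' s x) (hg : HasDerivWithinAt g g' s x) :
    HasDerivWithinAt (fun t => f t ⬝ᵥ g t) (f' ⬝ᵥ g x + f x ⬝ᵥ g') s x := by
  simp only [_root_.dotProduct, ← Finset.sum_add_distrib]
  exact HasDerivWithinAt.fun_sum fun a _ =>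
    (hasDerivWithinAt_pi.1 hf a).mul (hasDerivWithinAt_pi.1 hg a)

theorem HasDerivWithinAt.sub_mean {ι F : Type*} [Fintype ι] [NormedAddCommGroup F]
    [NormedSpace ℝ F] {u : ι → ℝ → F} {m : ℝ → F}
    (hm : ∀ τ, m τ = (Fintype.card ι : ℝ)⁻¹ • ∑ k, u k τ) {L : F →ₗ[ℝ] F} {r : F}
    {s : Set ℝ} {t : ℝ} (hu : ∀ k, HasDerivWithinAt (u k) (L (u k t) + r) s t) (j : ι) :
    HasDerivWithinAt (fun τ => u j τ - m τ) (L (u j t - m t)) s t := by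
  have : Nonempty ι := ⟨j⟩
  have hcard : (Fintype.card ι : ℝ) ≠ 0 := Nat.cast_ne_zero.mpr Fintype.card_ne_zero
  have hmean : HasDerivWithinAt m (L (m t) + r) s t := by
    rw [show m = fun τ => (Fintype.card ι : ℝ)⁻¹ • ∑ k, u k τ from funext hm]
    refine ((HasDerivWithinAt.fun_sum fun k _ => hu k).const_smul _).congr_deriv ?_
    simp only [Finset.sum_add_distrib, Finset.sum_const, Finset.card_univ, map_smul, map_sum,
      smul_add, ← Nat.cast_smul_eq_nsmul ℝ, smul_smul, inv_mul_cancel₀ hcard, one_smul]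
  refine ((hu j).sub hmean).congr_deriv ?_
  rw [map_sub]
  abel

theorem hasDerivWithinAt_sum_dotProduct_self {ι n : Type*} [Fintype ι] [Fintype n]
    {e : ι → ℝ → n → ℝ} {A : Matrix n n ℝ} {s : Set ℝ} {t : ℝ}
    (he : ∀ j, HasDerivWithinAt (e j) (A *ᵥ e j t) s t) :
    HasDerivWithinAt (fun τ => ∑ j, e j τ ⬝ᵥ e j τ) (2 * ∑ j, e j t ⬝ᵥ A *ᵥ e j t) s t := by
  refine (HasDerivWithinAt.fun_sum fun j _ => (he j).dotProduct (he j)).congr_deriv ?_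
  rw [Finset.mul_sum]
  exact Finset.sum_congr rfl fun j _ => by rw [dotProduct_comm]; ring

theorem stmt_9_general {K d J : ℕ}
    (G : Matrix (Fin K) (Fin d) ℝ) (y : Fin K → ℝ)
    (Γ : Matrix (Fin K) (Fin K) ℝ) (hΓ : Γ.PosSemidef)
    (Q : Matrix (Fin d) (Fin d) ℝ) (hQ : Q.PosSemidef) (b : Fin d → ℝ)
    (Λ : ℝ → ℝ)
    (hΛpos : ∀ t, 0 ≤ t → 0 ≤ Λ t)
    (u : Fin J → ℝ → (Fin d → ℝ))
    (ubar : ℝ → (Fin d → ℝ)) (hubar : ∀ t, ubar t = (1 / (J : ℝ)) • ∑ k, u k t)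
    (C : ℝ → Matrix (Fin d) (Fin d) ℝ)
    (hC : ∀ t, C t = (1 / (J : ℝ)) • ∑ k, vecMulVec (u k t - ubar t) (u k t - ubar t))
    (hode : ∀ j t, 0 ≤ t → HasDerivWithinAt (u j)
      (-(C t *ᵥ (Gᵀ *ᵥ (Γ *ᵥ (G *ᵥ u j t - y)) + Λ t • (Q *ᵥ u j t + b))))
      (Set.Ici 0) t)
    (E : ℝ → ℝ)
    (hE : ∀ t, E t = (1 / (J : ℝ)) * ∑ j, (u j t - ubar t) ⬝ᵥ (u j t - ubar t)) :
    AntitoneOn E (Set.Ici 0) ∧ ∀ t, 0 ≤ t → E t ≤ E 0 := by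
  set e : Fin J → ℝ → Fin d → ℝ := fun j t => u j t - ubar t
  set M : ℝ → Matrix (Fin d) (Fin d) ℝ := fun t => Gᵀ * Γ * G + Λ t • Q
  have hM : ∀ t, 0 ≤ t → (M t).PosSemidef := fun t ht =>
    hΓ.transpose_mul_mul_add_smul G hQ (hΛpos t ht)
  have he : ∀ t, 0 ≤ t → ∀ j,
      HasDerivWithinAt (e j) (-(C t * M t) *ᵥ e j t) (Set.Ici 0) t := fun t ht =>
    HasDerivWithinAt.sub_mean (by simpa only [Fintype.card_fin, one_div] using hubar)
      (L := mulVecLin (-(C t * M t))) (r := -(C t *ᵥ (Λ t • b - Gᵀ *ᵥ Γ *ᵥ y)))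
      fun k => (hode k t ht).congr_deriv (by
        simp only [M, mulVecLin_apply, neg_mulVec, ← mulVec_mulVec, add_mulVec, smul_mulVec,
          mulVec_sub, mulVec_add, mulVec_smul, smul_add]
        abel)
  set dE : ℝ → ℝ := fun t =>
    -(2 / (J : ℝ) ^ 2 * ∑ j, e j t ⬝ᵥ ((∑ k, vecMulVec (e k t) (e k t)) * M t) *ᵥ e j t)
  have hE' : ∀ t, 0 ≤ t → HasDerivWithinAt E (dE t) (Set.Ici 0) t := fun t ht => by
    rw [show E = fun τ => (1 / (J : ℝ)) * ∑ j, e j τ ⬝ᵥ e j τ from funext hE]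
    refine ((hasDerivWithinAt_sum_dotProduct_self (he t ht)).const_mul _).congr_deriv ?_
    simp only [dE, hC, Matrix.smul_mul, neg_mulVec, smul_mulVec, dotProduct_neg, dotProduct_smul,
      smul_eq_mul, Finset.sum_neg_distrib, ← Finset.mul_sum]
    ring
  have hanti : AntitoneOn E (Set.Ici 0) := by
    refine antitoneOn_of_hasDerivWithinAt_nonpos (f' := dE) (convex_Ici 0)
      (fun t ht => (hE' t ht).continuousWithinAt)
      (fun t ht => (hE' t (interior_subset ht)).mono interior_subset)
      (fun t ht => neg_nonpos.mpr (mul_nonneg (by positivity)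
        (sum_dotProduct_gram_mul_mulVec_nonneg (hM t (interior_subset ht)) _)))
  exact ⟨hanti, fun t ht => hanti Set.self_mem_Ici ht ht⟩

/-- Monotone decay of the ensemble spread for the continuous-time limit of the
constrained ensemble Kalman filter with linear forward model `G`, convex
quadratic constraint `A(u) = ½uᵀQu + bᵀu` and common nonnegative multiplier
`Λ(t)`: the quantity `E(t) = (1/J)∑_j ‖u^j(t) − ū(t)‖²` is nonincreasing on
`[0,∞)`; in particular `E(t) ≤ E(0)` for all `t ≥ 0`. -/
theorem stmt_9 {K d J : ℕ} (hJ : 0 < J)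
    (G : Matrix (Fin K) (Fin d) ℝ) (y : Fin K → ℝ)
    (Γ : Matrix (Fin K) (Fin K) ℝ) (hΓ : Γ.PosSemidef)
    (Q : Matrix (Fin d) (Fin d) ℝ) (hQ : Q.PosSemidef) (b : Fin d → ℝ)
    (Λ : ℝ → ℝ) (hΛcont : ContinuousOn Λ (Set.Ici 0))
    (hΛpos : ∀ t, 0 ≤ t → 0 ≤ Λ t)
    (u : Fin J → ℝ → (Fin d → ℝ))
    (ubar : ℝ → (Fin d → ℝ)) (hubar : ∀ t, ubar t = (1 / (J : ℝ)) • ∑ k, u k t)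
    (C : ℝ → Matrix (Fin d) (Fin d) ℝ)
    (hC : ∀ t, C t = (1 / (J : ℝ)) • ∑ k, vecMulVec (u k t - ubar t) (u k t - ubar t))
    (hode : ∀ j t, 0 ≤ t → HasDerivWithinAt (u j)
      (-(C t *ᵥ (Gᵀ *ᵥ (Γ *ᵥ (G *ᵥ u j t - y)) + Λ t • (Q *ᵥ u j t + b))))
      (Set.Ici 0) t)
    (E : ℝ → ℝ)
    (hE : ∀ t, E t = (1 / (J : ℝ)) * ∑ j, (u j t - ubar t) ⬝ᵥ (u j t - ubar t)) :
    AntitoneOn E (Set.Ici 0) ∧ ∀ t, 0 ≤ t → E t ≤ E 0 :=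
  stmt_9_general G y Γ hΓ Q hQ b Λ hΛpos u ubar hubar C hC hode E hE
end

section
/- Let G ∈ ℝ^{K×d}, y ∈ ℝ^K, Γ ∈ ℝ^{K×K}, and define ∇Φ(u) = −GᵀΓ(y − Gu). Let A : ℝ^d → ℝ^m be differentiable with Jacobian J_A(u) ∈ ℝ^{m×d}, and let C ∈ ℝ^{d×d} be symmetric positive definite. Suppose (u^{1,∞}, λ^{1,∞}), …, (u^{J,∞}, λ^{J,∞}) ∈ ℝ^d × ℝ^m each satisfy C(∇Φ(u^{j,∞}) + J_A(u^{j,∞})ᵀ λ^{j,∞}) = 0 and A(u^{j,∞}) = 0. Then the ensemble mean m̄∞ = (1/J)∑_j u^{j,∞} satisfies ∇Φ(m̄∞) + (1/J)∑_{j=1}^{J} J_A(u^{j,∞})ᵀ λ^{j,∞} = 0, together with A(u^{j,∞}) = 0 for all j. -/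
open Matrix

/-!
The gradient of the least-squares functional `u ↦ ½ (y - G u)ᵀ Γ (y - G u)` is affine in `u`,
so its value at the ensemble mean is the mean of its values at the ensemble members.
Since `C` is positive definite it is invertible, so each steady state gives
`J_A(uʲ)ᵀ λʲ = -∇Φ(uʲ)`, and averaging these identities gives the stationarity of the mean.
-/

theorem AffineMap.map_finset_average {k V₁ V₂ ι : Type*} [Field k] [CharZero k]
    [AddCommGroup V₁] [Module k V₁] [AddCommGroup V₂] [Module k V₂]
    (f : V₁ →ᵃ[k] V₂) {s : Finset ι} (hs : s.Nonempty) (u : ι → V₁) :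
    f ((s.card : k)⁻¹ • ∑ i ∈ s, u i) = (s.card : k)⁻¹ • ∑ i ∈ s, f (u i) := by
  have hcard : (s.card : k) ≠ 0 := Nat.cast_ne_zero.mpr hs.card_pos.ne'
  rw [f.decomp]
  simp only [Pi.add_apply, map_smul, map_sum, Finset.sum_add_distrib,
    Finset.sum_const, smul_add, ← Nat.cast_smul_eq_nsmul k, smul_smul, inv_mul_cancel₀ hcard,
    one_smul]

def Matrix.leastSquaresGrad {R κ ι : Type*} [CommRing R] [Fintype κ] [Fintype ι]
    (G : Matrix κ ι R) (Γ : Matrix κ κ R) (y : κ → R) : (ι → R) →ᵃ[R] (ι → R) :=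
  (Gᵀ * Γ * G).mulVecLin.toAffineMap - AffineMap.const R _ (Gᵀ *ᵥ (Γ *ᵥ y))

theorem Matrix.leastSquaresGrad_apply {R κ ι : Type*} [CommRing R] [Fintype κ] [Fintype ι]
    (G : Matrix κ ι R) (Γ : Matrix κ κ R) (y : κ → R) (u : ι → R) :
    leastSquaresGrad G Γ y u = -(Gᵀ *ᵥ (Γ *ᵥ (y - G *ᵥ u))) := by
  change (Gᵀ * Γ * G) *ᵥ u - Gᵀ *ᵥ (Γ *ᵥ y) = _
  rw [mulVec_sub, mulVec_sub, neg_sub, ← mulVec_mulVec, ← mulVec_mulVec]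

theorem stmt_13_general {K d m J : ℕ} (hJ : 0 < J)
    (G : Matrix (Fin K) (Fin d) ℝ) (y : Fin K → ℝ)
    (Γ : Matrix (Fin K) (Fin K) ℝ)
    (gradPhi : (Fin d → ℝ) → (Fin d → ℝ))
    (hgradPhi : ∀ u, gradPhi u = -(Gᵀ *ᵥ (Γ *ᵥ (y - G *ᵥ u))))
    (A : (Fin d → ℝ) → (Fin m → ℝ))
    (JA : (Fin d → ℝ) → Matrix (Fin m) (Fin d) ℝ)
    (C : Matrix (Fin d) (Fin d) ℝ) (hC : C.PosDef)
    (uinf : Fin J → (Fin d → ℝ)) (laminf : Fin J → (Fin m → ℝ))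
    (hsteady : ∀ j, C *ᵥ (gradPhi (uinf j) + (JA (uinf j))ᵀ *ᵥ laminf j) = 0)
    (hfeas : ∀ j, A (uinf j) = 0)
    (mbar : Fin d → ℝ) (hmbar : mbar = (1 / (J : ℝ)) • ∑ j, uinf j) :
    gradPhi mbar + (1 / (J : ℝ)) • ∑ j, (JA (uinf j))ᵀ *ᵥ laminf j = 0
      ∧ ∀ j, A (uinf j) = 0 := by
  have hgrad : gradPhi = leastSquaresGrad G Γ y := funext fun u ↦ by
    rw [hgradPhi, leastSquaresGrad_apply]
  have hmember : ∀ j, (JA (uinf j))ᵀ *ᵥ laminf j = -gradPhi (uinf j) := fun j ↦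
    eq_neg_of_add_eq_zero_right <| mulVec_injective_iff_isUnit.mpr hC.isUnit <| by
      rw [hsteady j, mulVec_zero]
  have hmean : gradPhi mbar = (1 / (J : ℝ)) • ∑ j, gradPhi (uinf j) := by
    have huniv : (Finset.univ : Finset (Fin J)).Nonempty := Finset.univ_nonempty_iff.mpr ⟨⟨0, hJ⟩⟩
    simpa [hgrad, hmbar] using (leastSquaresGrad G Γ y).map_finset_average huniv uinf
  refine ⟨?_, hfeas⟩
  simp only [hmember, Finset.sum_neg_distrib, smul_neg, hmean, add_neg_cancel]

/-- KKT stationarity of the ensemble mean: if each ensemble member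
`(u^{j,∞}, λ^{j,∞})` is a steady state of the continuous-time limit DAE of the
constrained EnKF with symmetric positive definite covariance `C`, then the
ensemble mean `m̄∞` satisfies
`∇Φ(m̄∞) + (1/J)∑_j J_A(u^{j,∞})ᵀλ^{j,∞} = 0` and `A(u^{j,∞}) = 0` for all `j`. -/
theorem stmt_13 {K d m J : ℕ} (hJ : 0 < J)
    (G : Matrix (Fin K) (Fin d) ℝ) (y : Fin K → ℝ)
    (Γ : Matrix (Fin K) (Fin K) ℝ)
    (gradPhi : (Fin d → ℝ) → (Fin d → ℝ))
    (hgradPhi : ∀ u, gradPhi u = -(Gᵀ *ᵥ (Γ *ᵥ (y - G *ᵥ u))))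
    (A : (Fin d → ℝ) → (Fin m → ℝ))
    (JA : (Fin d → ℝ) → Matrix (Fin m) (Fin d) ℝ)
    (hJA : ∀ u, HasFDerivAt A
      (LinearMap.toContinuousLinearMap (Matrix.mulVecLin (JA u))) u)
    (C : Matrix (Fin d) (Fin d) ℝ) (hC : C.PosDef)
    (uinf : Fin J → (Fin d → ℝ)) (laminf : Fin J → (Fin m → ℝ))
    (hsteady : ∀ j, C *ᵥ (gradPhi (uinf j) + (JA (uinf j))ᵀ *ᵥ laminf j) = 0)
    (hfeas : ∀ j, A (uinf j) = 0)
    (mbar : Fin d → ℝ) (hmbar : mbar = (1 / (J : ℝ)) • ∑ j, uinf j) :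
    gradPhi mbar + (1 / (J : ℝ)) • ∑ j, (JA (uinf j))ᵀ *ᵥ laminf j = 0
      ∧ ∀ j, A (uinf j) = 0 :=
  stmt_13_general hJ G y Γ gradPhi hgradPhi A JA C hC uinf laminf hsteady hfeas mbar hmbar
end

section
/- Let T > 0, L1, L2 ≥ 0, r0 ≥ 0, and let r, s, δ1, δ2 : [0, T] → [0, ∞) be continuous functions such that for all t ∈ [0, T]: r(t) ≤ r0 + L1 ∫₀ᵗ (r(τ) + s(τ)) dτ + ∫₀ᵗ δ1(τ) dτ, and s(t) ≤ L2 (r(t) + δ2(t)). Then for all t ∈ [0, T], r(t) ≤ ( r0 + T ( L1 L2 · max_{0 ≤ τ ≤ t} δ2(τ) + max_{0 ≤ τ ≤ t} δ1(τ) ) ) · exp( L1 (1 + L2) t ). -/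
open Set

/-- Quantitative Gronwall-type stability estimate for the perturbed
continuous-time limit DAE of the constrained ensemble Kalman filter: if
`r(t) ≤ r0 + L1 ∫₀ᵗ (r + s) + ∫₀ᵗ δ1` and `s(t) ≤ L2 (r(t) + δ2(t))` on
`[0,T]`, then
`r(t) ≤ (r0 + T(L1 L2 max_{[0,t]} δ2 + max_{[0,t]} δ1)) exp(L1(1+L2)t)`. -/
theorem stmt_14 (T L1 L2 r0 : ℝ) (hT : 0 < T) (hL1 : 0 ≤ L1) (hL2 : 0 ≤ L2)
    (hr0 : 0 ≤ r0)
    (r s δ1 δ2 : ℝ → ℝ)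
    (hrc : ContinuousOn r (Icc 0 T)) (hsc : ContinuousOn s (Icc 0 T))
    (hδ1c : ContinuousOn δ1 (Icc 0 T)) (hδ2c : ContinuousOn δ2 (Icc 0 T))
    (hrpos : ∀ t ∈ Icc (0 : ℝ) T, 0 ≤ r t)
    (hspos : ∀ t ∈ Icc (0 : ℝ) T, 0 ≤ s t)
    (hδ1pos : ∀ t ∈ Icc (0 : ℝ) T, 0 ≤ δ1 t)
    (hδ2pos : ∀ t ∈ Icc (0 : ℝ) T, 0 ≤ δ2 t)
    (hineq1 : ∀ t ∈ Icc (0 : ℝ) T,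
      r t ≤ r0 + L1 * (∫ τ in (0 : ℝ)..t, (r τ + s τ))
        + ∫ τ in (0 : ℝ)..t, δ1 τ)
    (hineq2 : ∀ t ∈ Icc (0 : ℝ) T, s t ≤ L2 * (r t + δ2 t)) :
    ∀ t ∈ Icc (0 : ℝ) T,
      r t ≤ (r0 + T * (L1 * L2 * sSup (δ2 '' Icc 0 t) + sSup (δ1 '' Icc 0 t)))
        * Real.exp (L1 * (1 + L2) * t) := by
  intro t ht
  obtain ⟨ht0, htT⟩ := ht
  have htsub : Icc (0 : ℝ) t ⊆ Icc 0 T := Icc_subset_Icc le_rfl htT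
  set M1 := sSup (δ1 '' Icc 0 t) with hM1def
  set M2 := sSup (δ2 '' Icc 0 t) with hM2def
  have hbdd1 : BddAbove (δ1 '' Icc 0 t) :=
    (isCompact_Icc.image_of_continuousOn (hδ1c.mono htsub)).bddAbove
  have hbdd2 : BddAbove (δ2 '' Icc 0 t) :=
    (isCompact_Icc.image_of_continuousOn (hδ2c.mono htsub)).bddAbove
  have hM1 : ∀ τ ∈ Icc (0 : ℝ) t, δ1 τ ≤ M1 := fun τ hτ =>
    le_csSup hbdd1 ⟨τ, hτ, rfl⟩
  have hM2 : ∀ τ ∈ Icc (0 : ℝ) t, δ2 τ ≤ M2 := fun τ hτ =>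
    le_csSup hbdd2 ⟨τ, hτ, rfl⟩
  have h0mem : (0 : ℝ) ∈ Icc (0 : ℝ) t := ⟨le_rfl, ht0⟩
  have h0memT : (0 : ℝ) ∈ Icc (0 : ℝ) T := ⟨le_rfl, le_of_lt hT⟩
  have hM1nn : 0 ≤ M1 := le_trans (hδ1pos 0 h0memT) (hM1 0 h0mem)
  have hM2nn : 0 ≤ M2 := le_trans (hδ2pos 0 h0memT) (hM2 0 h0mem)
  set K0 : ℝ := r0 + T * (L1 * L2 * M2 + M1) with hK0def
  set C : ℝ := L1 * (1 + L2) with hCdef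
  have hCnn : 0 ≤ C := mul_nonneg hL1 (by linarith)
  have hK0nn : 0 ≤ K0 := by
    have : 0 ≤ L1 * L2 * M2 + M1 := by positivity
    have := mul_nonneg (le_of_lt hT) this
    simp only [hK0def]; linarith
  -- integrability
  have hint : ∀ (f : ℝ → ℝ), ContinuousOn f (Icc 0 T) → ∀ x ∈ Icc (0 : ℝ) t,
      IntervalIntegrable f MeasureTheory.volume 0 x := by
    intro f hf x hx
    apply (hf.mono ?_).intervalIntegrable
    rw [uIcc_of_le hx.1]
    exact htsub.trans' (Icc_subset_Icc le_rfl hx.2)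
  have hrint := hint r hrc
  have hsint := hint s hsc
  have hδ1int := hint δ1 hδ1c
  have hδ2int := hint δ2 hδ2c
  -- key integral inequality
  have hkey : ∀ x ∈ Icc (0 : ℝ) t, r x ≤ K0 + C * ∫ τ in (0 : ℝ)..x, r τ := by
    intro x hx
    have hxsub : Icc (0 : ℝ) x ⊆ Icc 0 t := Icc_subset_Icc le_rfl hx.2
    have hxT : x ∈ Icc (0 : ℝ) T := htsub hx
    set A : ℝ := ∫ τ in (0 : ℝ)..x, r τ with hA
    have hAnn : 0 ≤ A := by
      apply intervalIntegral.integral_nonneg hx.1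
      intro u hu; exact hrpos u (htsub (hxsub hu))
    have hS : (∫ τ in (0 : ℝ)..x, s τ) ≤ L2 * (A + ∫ τ in (0 : ℝ)..x, δ2 τ) := by
      have h1 : (∫ τ in (0 : ℝ)..x, s τ) ≤ ∫ τ in (0 : ℝ)..x, L2 * (r τ + δ2 τ) := by
        apply intervalIntegral.integral_mono_on hx.1 (hsint x hx)
          (((hrint x hx).add (hδ2int x hx)).const_mul L2)
        intro u hu; exact hineq2 u (htsub (hxsub hu))
      calc (∫ τ in (0 : ℝ)..x, s τ) ≤ ∫ τ in (0 : ℝ)..x, L2 * (r τ + δ2 τ) := h1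
        _ = L2 * (A + ∫ τ in (0 : ℝ)..x, δ2 τ) := by
            rw [intervalIntegral.integral_const_mul,
              intervalIntegral.integral_add (hrint x hx) (hδ2int x hx)]
    have hD : (∫ τ in (0 : ℝ)..x, δ2 τ) ≤ T * M2 := by
      have h1 : (∫ τ in (0 : ℝ)..x, δ2 τ) ≤ ∫ _ in (0 : ℝ)..x, M2 := by
        apply intervalIntegral.integral_mono_on hx.1 (hδ2int x hx)
          intervalIntegrable_const
        intro u hu; exact hM2 u (hxsub hu)
      have h2 : (∫ _ in (0 : ℝ)..x, M2) = x * M2 := by simp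
      have hxT' : x ≤ T := hxT.2
      nlinarith [mul_le_mul_of_nonneg_right hxT' hM2nn]
    have hB : (∫ τ in (0 : ℝ)..x, δ1 τ) ≤ T * M1 := by
      have h1 : (∫ τ in (0 : ℝ)..x, δ1 τ) ≤ ∫ _ in (0 : ℝ)..x, M1 := by
        apply intervalIntegral.integral_mono_on hx.1 (hδ1int x hx)
          intervalIntegrable_const
        intro u hu; exact hM1 u (hxsub hu)
      have h2 : (∫ _ in (0 : ℝ)..x, M1) = x * M1 := by simp
      have hxT' : x ≤ T := hxT.2
      nlinarith [mul_le_mul_of_nonneg_right hxT' hM1nn]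
    have hrs : (∫ τ in (0 : ℝ)..x, (r τ + s τ)) = A + ∫ τ in (0 : ℝ)..x, s τ := by
      rw [intervalIntegral.integral_add (hrint x hx) (hsint x hx)]
    have h1 := hineq1 x hxT
    rw [hrs] at h1
    have hLS : L1 * (∫ τ in (0 : ℝ)..x, s τ) ≤
        L1 * (L2 * (A + ∫ τ in (0 : ℝ)..x, δ2 τ)) :=
      mul_le_mul_of_nonneg_left hS hL1
    have hLD : L1 * L2 * (∫ τ in (0 : ℝ)..x, δ2 τ) ≤ L1 * L2 * (T * M2) :=
      mul_le_mul_of_nonneg_left hD (mul_nonneg hL1 hL2)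
    simp only [hK0def, hCdef]
    nlinarith [hLS, hLD, hB]
  -- Gronwall on the primitive F
  set F : ℝ → ℝ := fun x => ∫ τ in (0 : ℝ)..x, r τ with hF
  have hFc : ContinuousOn F (Icc 0 t) := by
    have : ContinuousOn F (uIcc 0 t) := by
      apply intervalIntegral.continuousOn_primitive_interval
      rw [uIcc_of_le ht0]
      exact (hrc.mono htsub).integrableOn_compact isCompact_Icc
    rwa [uIcc_of_le ht0] at this
  have hFnn : ∀ x ∈ Icc (0 : ℝ) t, 0 ≤ F x := by
    intro x hx
    apply intervalIntegral.integral_nonneg hx.1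
    intro u hu; exact hrpos u (htsub (Icc_subset_Icc le_rfl hx.2 hu))
  have hFderiv : ∀ x ∈ Ico (0 : ℝ) t, HasDerivWithinAt F (r x) (Ici x) x := by
    intro x hx
    have hxT : x ∈ Icc (0 : ℝ) T := ⟨hx.1, le_trans (le_of_lt hx.2) htT⟩
    have hxltT : x < T := lt_of_lt_of_le hx.2 htT
    have hmem : Icc (0 : ℝ) T ∈ nhdsWithin x (Ici x) := by
      apply mem_nhdsWithin.2
      exact ⟨Iio T, isOpen_Iio, hxltT, fun u hu => ⟨le_trans hx.1 hu.2, le_of_lt hu.1⟩⟩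
    have hmem' : Icc (0 : ℝ) T ∈ nhdsWithin x (Ioi x) :=
      nhdsWithin_mono x Ioi_subset_Ici_self hmem
    have hmeas : StronglyMeasurableAtFilter r (nhdsWithin x (Ioi x)) :=
      ⟨Icc 0 T, hmem', hrc.aestronglyMeasurable measurableSet_Icc⟩
    have hcont : ContinuousWithinAt r (Ioi x) x :=
      ((hrc x hxT).mono_of_mem_nhdsWithin hmem')
    exact intervalIntegral.integral_hasDerivWithinAt_right
      (hrint x ⟨hx.1, le_of_lt hx.2⟩) hmeas hcont
  have hbound : ∀ x ∈ Ico (0 : ℝ) t, ‖r x‖ ≤ C * ‖F x‖ + K0 := by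
    intro x hx
    have hx' : x ∈ Icc (0 : ℝ) t := ⟨hx.1, le_of_lt hx.2⟩
    have hrnn : 0 ≤ r x := hrpos x (htsub hx')
    rw [Real.norm_of_nonneg hrnn, Real.norm_of_nonneg (hFnn x hx')]
    have := hkey x hx'
    linarith
  have hF0 : ‖F (0 : ℝ)‖ ≤ (0 : ℝ) := by
    simp [hF]
  have hGron := norm_le_gronwallBound_of_norm_deriv_right_le hFc hFderiv hF0 hbound
  have hFt : F t ≤ gronwallBound 0 C K0 t := by
    have := hGron t ⟨ht0, le_rfl⟩
    rw [Real.norm_of_nonneg (hFnn t ⟨ht0, le_rfl⟩), sub_zero] at this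
    exact this
  have hfinal : r t ≤ K0 + C * gronwallBound 0 C K0 t :=
    le_trans (hkey t ⟨ht0, le_rfl⟩)
      (by linarith [mul_le_mul_of_nonneg_left hFt hCnn])
  have hgoal : K0 + C * gronwallBound 0 C K0 t = K0 * Real.exp (C * t) := by
    rcases eq_or_ne C 0 with hC | hC
    · simp [hC, gronwallBound_K0]
    · rw [gronwallBound_of_K_ne_0 hC]
      field_simp
      ring
  calc r t ≤ K0 + C * gronwallBound 0 C K0 t := hfinal
    _ = K0 * Real.exp (C * t) := hgoal
    _ = (r0 + T * (L1 * L2 * M2 + M1)) * Real.exp (L1 * (1 + L2) * t) := by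
        rw [hK0def, hCdef]
end
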